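/- arXiv:math/0701229 — 3 statements merged into one kernel-verified Lean document; each statement's English description precedes it below -/
import Mathlib

section
/- Let ν be a probability measure on a product of two measurable spaces with marginals ν₁ and ν₂. If H_{P₁×P₂}(ν) < ∞ for some product probability measure P₁×P₂, then ν is absolutely continuous with respect to ν₁×ν₂, and ν₁ ≪ P₁ and ν₂ ≪ P₂. -/
/-!
Finite relative entropy forces `ν ≪ P₁ × P₂`: a set `s` with `ν s > 0 = (P₁ × P₂) s` would make
the partition `{s, sᶜ}` contribute `+∞`. Projecting gives `ν₁ ≪ P₁` and `ν₂ ≪ P₂`. Writing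
`gᵢ = dνᵢ/dPᵢ`, the measure `ν` lives on `{g₁ ≠ 0} × {g₂ ≠ 0}`, and there `P₁ × P₂` is dominated
by `ν₁ × ν₂`, since `Pᵢ` restricted to `{gᵢ ≠ 0}` is dominated by `gᵢ Pᵢ ≤ νᵢ`.
-/

open MeasureTheory

/-- A finite measurable partition of the space, given as a finset of sets. -/
def IsFinPart {Ω : Type*} [MeasurableSpace Ω] (P : Finset (Set Ω)) : Prop :=
  (∀ E ∈ P, MeasurableSet E) ∧ ((P : Set (Set Ω)).PairwiseDisjoint id) ∧
    ⋃₀ (P : Set (Set Ω)) = Set.univ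

/-- The relative-entropy sum `S_Π(P|Q)` with the conventions `0·log(0/q) = 0` and
`p·log(p/0) = +∞` for `p > 0`. -/
noncomputable def partSum {Ω : Type*} [MeasurableSpace Ω] (P Q : Measure Ω)
    (Pt : Finset (Set Ω)) : EReal :=
  ∑ E ∈ Pt, if P E = 0 then (0 : EReal) else if Q E = 0 then ⊤ else
    (((P E).toReal * Real.log ((P E).toReal / (Q E).toReal) : ℝ) : EReal)

/-- The relative entropy `H_Q(P) = sup_Π S_Π(P|Q)` over finite measurable partitions. -/
noncomputable def relEnt {Ω : Type*} [MeasurableSpace Ω] (P Q : Measure Ω) : EReal :=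
  ⨆ Pt ∈ {Pt : Finset (Set Ω) | IsFinPart Pt}, partSum P Q Pt


section RelEnt

variable {Ω : Type*} [MeasurableSpace Ω]

lemma isFinPart_pair_compl {s : Set Ω} (hs : MeasurableSet s) : IsFinPart {s, sᶜ} := by
  refine ⟨by simp [hs], ?_, by simp⟩
  rw [Finset.coe_pair]
  refine (Set.pairwiseDisjoint_singleton _ _).insert fun t ht _ ↦ ?_
  rw [Set.mem_singleton_iff.1 ht]
  exact disjoint_compl_right

lemma partSum_pair_compl_eq_top {P Q : Measure Ω} {s : Set Ω} (hPs : P s ≠ 0) (hQs : Q s = 0) :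
    partSum P Q {s, sᶜ} = ⊤ := by
  have hs : s ≠ sᶜ := by
    obtain ⟨x, -⟩ := nonempty_of_measure_ne_zero hPs
    have : Nonempty Ω := ⟨x⟩
    exact ne_compl_self
  rw [partSum, Finset.sum_pair hs, if_neg hPs, if_pos hQs]
  refine EReal.top_add_of_ne_bot ?_
  split_ifs
  exacts [EReal.zero_ne_bot, top_ne_bot, EReal.coe_ne_bot _]

lemma partSum_le_relEnt (P Q : Measure Ω) {Pt : Finset (Set Ω)} (hPt : IsFinPart Pt) :
    partSum P Q Pt ≤ relEnt P Q :=
  le_iSup₂ (f := fun Pt (_ : Pt ∈ {Pt : Finset (Set Ω) | IsFinPart Pt}) ↦ partSum P Q Pt) Pt hPt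

lemma absolutelyContinuous_of_relEnt_lt_top {P Q : Measure Ω} (hfin : relEnt P Q < ⊤) :
    P ≪ Q := by
  refine Measure.AbsolutelyContinuous.mk fun s hs hQs ↦ ?_
  by_contra hPs
  have := partSum_le_relEnt P Q (isFinPart_pair_compl hs)
  rw [partSum_pair_compl_eq_top hPs hQs] at this
  exact (this.trans_lt hfin).ne rfl

end RelEnt

namespace MeasureTheory.Measure

variable {α β : Type*} [MeasurableSpace α] [MeasurableSpace β]

lemma restrict_rnDeriv_ne_zero_absolutelyContinuous (μ ν : Measure α) :
    ν.restrict {x | μ.rnDeriv ν x ≠ 0} ≪ μ := by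
  set A := {x | μ.rnDeriv ν x ≠ 0}
  have hA : MeasurableSet A := measurable_rnDeriv μ ν (measurableSet_singleton 0).compl
  have h := withDensity_absolutelyContinuous' (μ := ν.restrict A)
    (measurable_rnDeriv μ ν).aemeasurable (ae_restrict_mem hA)
  rw [← restrict_withDensity hA] at h
  exact h.trans (absolutelyContinuous_of_le (restrict_le_self.trans (withDensity_rnDeriv_le μ ν)))

variable {μ₁ : Measure α} {μ₂ : Measure β} {ν : Measure (α × β)}

lemma AbsolutelyContinuous.fst_of_prod [SFinite μ₂] (h : ν ≪ μ₁.prod μ₂) : ν.fst ≪ μ₁ := by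
  refine AbsolutelyContinuous.mk fun t ht h0 ↦ ?_
  rw [fst_apply ht, ← Set.prod_univ]
  exact h (by rw [prod_prod, h0, zero_mul])

lemma AbsolutelyContinuous.snd_of_prod [SFinite μ₂] (h : ν ≪ μ₁.prod μ₂) : ν.snd ≪ μ₂ := by
  refine AbsolutelyContinuous.mk fun t ht h0 ↦ ?_
  rw [snd_apply ht, ← Set.univ_prod]
  exact h (by rw [prod_prod, h0, mul_zero])

lemma AbsolutelyContinuous.fst_prod_snd [SigmaFinite μ₁] [SigmaFinite μ₂] [IsFiniteMeasure ν]
    (h : ν ≪ μ₁.prod μ₂) : ν ≪ ν.fst.prod ν.snd := by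
  set A₁ := {x | ν.fst.rnDeriv μ₁ x ≠ 0}
  set A₂ := {y | ν.snd.rnDeriv μ₂ y ≠ 0}
  have hA₁ : ∀ᵐ p ∂ν, p.1 ∈ A₁ :=
    ae_of_ae_map measurable_fst.aemeasurable
      ((rnDeriv_pos h.fst_of_prod).mono fun _ hx ↦ hx.ne')
  have hA₂ : ∀ᵐ p ∂ν, p.2 ∈ A₂ :=
    ae_of_ae_map measurable_snd.aemeasurable
      ((rnDeriv_pos h.snd_of_prod).mono fun _ hy ↦ hy.ne')
  have hν : ν.restrict (A₁ ×ˢ A₂) = ν :=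
    restrict_eq_self_of_ae_mem (hA₁.and hA₂)
  have h' : ν ≪ (μ₁.restrict A₁).prod (μ₂.restrict A₂) := by
    simpa only [hν, prod_restrict] using h.restrict (A₁ ×ˢ A₂)
  exact h'.trans ((restrict_rnDeriv_ne_zero_absolutelyContinuous _ _).prod
    (restrict_rnDeriv_ne_zero_absolutelyContinuous _ _))

end MeasureTheory.Measure

/-- If `H_{P₁×P₂}(ν) < ∞`, then `ν ≪ ν₁×ν₂`, `ν₁ ≪ P₁` and `ν₂ ≪ P₂`. -/
theorem absolutelyContinuous_of_relEnt_prod_lt_top {Ω₁ Ω₂ : Type*}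
    [MeasurableSpace Ω₁] [MeasurableSpace Ω₂]
    (P₁ : Measure Ω₁) (P₂ : Measure Ω₂) [IsProbabilityMeasure P₁] [IsProbabilityMeasure P₂]
    (ν : Measure (Ω₁ × Ω₂)) [IsProbabilityMeasure ν]
    (hfin : relEnt ν (P₁.prod P₂) < ⊤) :
    ν ≪ ν.fst.prod ν.snd ∧ ν.fst ≪ P₁ ∧ ν.snd ≪ P₂ := by
  have h := absolutelyContinuous_of_relEnt_lt_top hfin
  exact ⟨h.fst_prod_snd, h.fst_of_prod, h.snd_of_prod⟩
end

section
/- Let f be a probability density on ℝⁿ with ∫_{ℝⁿ} ||x||² f(x) dx = n. Then the differential entropy ∫_{ℝⁿ} (−f log f) dx is at most (n/2)(1 + log(2π)), with equality if and only if f equals the standard Gaussian density f(x) = (2π)^{-n/2} exp(−||x||²/2) almost everywhere. -/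
/-!
Gibbs' inequality: for densities `f ≥ 0` and `g > 0` of equal mass, the entropy of `f` is at
most its cross entropy `∫ -f log g`, with equality iff `f = g` a.e.; this is the integral form
of `g · klFun (f / g) ≥ 0`. Against the standard Gaussian `g`, `log g` is an affine function of
`‖x‖²`, so the cross entropy only sees the mass and second moment of `f`, and under the given
constraints it equals the entropy of the Gaussian itself.
-/

open MeasureTheory Real InformationTheory

lemma mul_klFun_div (a : ℝ) {b : ℝ} (hb : b ≠ 0) :
    b * klFun (a / b) = a * log a - a * log b + b - a := by
  rcases eq_or_ne a 0 with rfl | ha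
  · simp [klFun_zero]
  · rw [klFun_apply, log_div ha hb]
    field_simp

lemma mul_klFun_div_nonneg {a b : ℝ} (ha : 0 ≤ a) (hb : 0 < b) : 0 ≤ b * klFun (a / b) :=
  mul_nonneg hb.le (klFun_nonneg (div_nonneg ha hb.le))

lemma mul_klFun_div_eq_zero_iff {a b : ℝ} (ha : 0 ≤ a) (hb : 0 < b) :
    b * klFun (a / b) = 0 ↔ a = b := by
  rw [mul_eq_zero, or_iff_right hb.ne', klFun_eq_zero_iff (div_nonneg ha hb.le),
    div_eq_one_iff_eq hb.ne']

section Gibbs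

variable {α : Type*} [MeasurableSpace α] {μ : Measure α} {f g : α → ℝ}

lemma integrable_mul_klFun_div (hg : ∀ᵐ x ∂μ, g x ≠ 0) (hfi : Integrable f μ)
    (hgi : Integrable g μ) (hflogf : Integrable (fun x => f x * log (f x)) μ)
    (hflogg : Integrable (fun x => f x * log (g x)) μ) :
    Integrable (fun x => g x * klFun (f x / g x)) μ :=
  (((hflogf.sub hflogg).add hgi).sub hfi).congr <| by
    filter_upwards [hg] with x hx using (mul_klFun_div (f x) hx).symm

lemma integral_mul_klFun_div (hg : ∀ᵐ x ∂μ, g x ≠ 0) (hfi : Integrable f μ)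
    (hgi : Integrable g μ) (hflogf : Integrable (fun x => f x * log (f x)) μ)
    (hflogg : Integrable (fun x => f x * log (g x)) μ) :
    ∫ x, g x * klFun (f x / g x) ∂μ =
      ∫ x, f x * log (f x) ∂μ - ∫ x, f x * log (g x) ∂μ + ∫ x, g x ∂μ - ∫ x, f x ∂μ := by
  have hA : Integrable (fun x => f x * log (f x) - f x * log (g x)) μ := hflogf.sub hflogg
  have hB : Integrable (fun x => f x * log (f x) - f x * log (g x) + g x) μ := hA.add hgi
  rw [integral_congr_ae (g := fun x => f x * log (f x) - f x * log (g x) + g x - f x)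
      (by filter_upwards [hg] with x hx using mul_klFun_div (f x) hx),
    integral_sub hB hfi, integral_add hA hgi, integral_sub hflogf hflogg]

lemma integral_neg_mul_log_eq_cross_entropy_sub (hg : ∀ᵐ x ∂μ, g x ≠ 0)
    (hfi : Integrable f μ) (hgi : Integrable g μ) (hfg : ∫ x, f x ∂μ = ∫ x, g x ∂μ)
    (hflogf : Integrable (fun x => f x * log (f x)) μ)
    (hflogg : Integrable (fun x => f x * log (g x)) μ) :
    ∫ x, -(f x * log (f x)) ∂μ =
      ∫ x, -(f x * log (g x)) ∂μ - ∫ x, g x * klFun (f x / g x) ∂μ := by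
  rw [integral_mul_klFun_div hg hfi hgi hflogf hflogg, hfg, integral_neg, integral_neg]
  ring

theorem integral_neg_mul_log_le_cross_entropy (hf : 0 ≤ᵐ[μ] f) (hg : ∀ᵐ x ∂μ, 0 < g x)
    (hfi : Integrable f μ) (hgi : Integrable g μ) (hfg : ∫ x, f x ∂μ = ∫ x, g x ∂μ)
    (hflogf : Integrable (fun x => f x * log (f x)) μ)
    (hflogg : Integrable (fun x => f x * log (g x)) μ) :
    ∫ x, -(f x * log (f x)) ∂μ ≤ ∫ x, -(f x * log (g x)) ∂μ := by
  have hkl : 0 ≤ ∫ x, g x * klFun (f x / g x) ∂μ := integral_nonneg_of_ae <| by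
    filter_upwards [hf, hg] with x hfx hgx using mul_klFun_div_nonneg hfx hgx
  rw [integral_neg_mul_log_eq_cross_entropy_sub (hg.mono fun _ h => h.ne') hfi hgi hfg
    hflogf hflogg]
  linarith

theorem integral_neg_mul_log_eq_cross_entropy_iff (hf : 0 ≤ᵐ[μ] f) (hg : ∀ᵐ x ∂μ, 0 < g x)
    (hfi : Integrable f μ) (hgi : Integrable g μ) (hfg : ∫ x, f x ∂μ = ∫ x, g x ∂μ)
    (hflogf : Integrable (fun x => f x * log (f x)) μ)
    (hflogg : Integrable (fun x => f x * log (g x)) μ) :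
    ∫ x, -(f x * log (f x)) ∂μ = ∫ x, -(f x * log (g x)) ∂μ ↔ f =ᵐ[μ] g := by
  have hg0 : ∀ᵐ x ∂μ, g x ≠ 0 := hg.mono fun _ h => h.ne'
  have hkl_nonneg : 0 ≤ᵐ[μ] fun x => g x * klFun (f x / g x) := by
    filter_upwards [hf, hg] with x hfx hgx using mul_klFun_div_nonneg hfx hgx
  rw [integral_neg_mul_log_eq_cross_entropy_sub hg0 hfi hgi hfg hflogf hflogg, sub_eq_self,
    integral_eq_zero_iff_of_nonneg_ae hkl_nonneg
      (integrable_mul_klFun_div hg0 hfi hgi hflogf hflogg)]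
  refine Filter.eventually_congr ?_
  filter_upwards [hf, hg] with x hfx hgx using mul_klFun_div_eq_zero_iff hfx hgx

end Gibbs

section StdGaussian

variable (V : Type*) [NormedAddCommGroup V] [InnerProductSpace ℝ V]

noncomputable def stdGaussianDensity (x : V) : ℝ :=
  (2 * π) ^ (-(Module.finrank ℝ V : ℝ) / 2) * exp (-‖x‖ ^ 2 / 2)

variable {V}

lemma stdGaussianDensity_pos (x : V) : 0 < stdGaussianDensity V x := by
  unfold stdGaussianDensity
  positivity

lemma log_stdGaussianDensity (x : V) :
    log (stdGaussianDensity V x) = -(Module.finrank ℝ V : ℝ) / 2 * log (2 * π) - ‖x‖ ^ 2 / 2 := by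
  rw [stdGaussianDensity, log_mul (by positivity) (exp_ne_zero _), log_rpow (by positivity),
    log_exp]
  ring

lemma mul_log_stdGaussianDensity (f : V → ℝ) :
    (fun x => f x * log (stdGaussianDensity V x)) = fun x =>
      -(Module.finrank ℝ V : ℝ) / 2 * log (2 * π) * f x - 1 / 2 * (‖x‖ ^ 2 * f x) := by
  ext x
  rw [log_stdGaussianDensity]
  ring

variable [MeasurableSpace V] {μ : Measure V}

lemma integrable_mul_log_stdGaussianDensity {f : V → ℝ} (hfi : Integrable f μ)
    (hmom : Integrable (fun x => ‖x‖ ^ 2 * f x) μ) :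
    Integrable (fun x => f x * log (stdGaussianDensity V x)) μ := by
  rw [mul_log_stdGaussianDensity]
  exact (hfi.const_mul _).sub (hmom.const_mul _)

lemma integral_mul_log_stdGaussianDensity {f : V → ℝ} (hfi : Integrable f μ)
    (hmom : Integrable (fun x => ‖x‖ ^ 2 * f x) μ) :
    ∫ x, f x * log (stdGaussianDensity V x) ∂μ =
      -(Module.finrank ℝ V : ℝ) / 2 * log (2 * π) * (∫ x, f x ∂μ) -
        1 / 2 * ∫ x, ‖x‖ ^ 2 * f x ∂μ := by
  rw [mul_log_stdGaussianDensity, integral_sub (hfi.const_mul _) (hmom.const_mul _),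
    integral_const_mul, integral_const_mul]

variable [FiniteDimensional ℝ V] [BorelSpace V]

lemma integral_stdGaussianDensity : ∫ x, stdGaussianDensity V x = 1 := by
  have hexp : ∫ x : V, exp (-‖x‖ ^ 2 / 2) = (2 * π) ^ ((Module.finrank ℝ V : ℝ) / 2) := by
    simp_rw [neg_div, div_eq_inv_mul (‖_‖ ^ 2), ← neg_mul]
    rw [GaussianFourier.integral_rexp_neg_mul_sq_norm (by norm_num), div_inv_eq_mul, mul_comm π]
  unfold stdGaussianDensity
  rw [integral_const_mul, hexp, ← rpow_add (by positivity), neg_div, neg_add_cancel, rpow_zero]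

lemma integrable_stdGaussianDensity : Integrable (stdGaussianDensity V) :=
  Integrable.of_integral_ne_zero (by simp [integral_stdGaussianDensity])

end StdGaussian

theorem entropy_le_gaussian_general (n : ℕ) (f : EuclideanSpace ℝ (Fin n) → ℝ)
    (hf0 : ∀ x, 0 ≤ f x)
    (hfint : Integrable f volume) (hf1 : ∫ x, f x ∂volume = 1)
    (hmom_int : Integrable (fun x => ‖x‖ ^ 2 * f x) volume)
    (hmom : ∫ x, ‖x‖ ^ 2 * f x ∂volume = (n : ℝ))
    (hent_int : Integrable (fun x => f x * Real.log (f x)) volume) :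
    ∫ x, -(f x * Real.log (f x)) ∂volume ≤ (n : ℝ) / 2 * (1 + Real.log (2 * Real.pi)) ∧
      ((∫ x, -(f x * Real.log (f x)) ∂volume = (n : ℝ) / 2 * (1 + Real.log (2 * Real.pi))) ↔
        f =ᵐ[volume] fun x => (2 * Real.pi) ^ (-(n : ℝ) / 2) * Real.exp (-‖x‖ ^ 2 / 2)) := by
  let φ := stdGaussianDensity (EuclideanSpace ℝ (Fin n))
  have hφ : (fun x => (2 * π) ^ (-(n : ℝ) / 2) * exp (-‖x‖ ^ 2 / 2)) = φ := by
    ext x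
    simp [φ, stdGaussianDensity]
  have hcross : ∫ x, -(f x * log (φ x)) = n / 2 * (1 + log (2 * π)) := by
    rw [integral_neg, integral_mul_log_stdGaussianDensity hfint hmom_int, hf1, hmom,
      finrank_euclideanSpace_fin]
    ring
  have hmass : ∫ x, f x = ∫ x, φ x := by rw [hf1, integral_stdGaussianDensity]
  have hf : 0 ≤ᵐ[volume] f := ae_of_all _ hf0
  have hφpos : ∀ᵐ x ∂volume, 0 < φ x := ae_of_all _ stdGaussianDensity_pos
  have hflogφ := integrable_mul_log_stdGaussianDensity hfint hmom_int
  rw [hφ, ← hcross]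
  exact ⟨integral_neg_mul_log_le_cross_entropy hf hφpos hfint integrable_stdGaussianDensity
      hmass hent_int hflogφ,
    integral_neg_mul_log_eq_cross_entropy_iff hf hφpos hfint integrable_stdGaussianDensity
      hmass hent_int hflogφ⟩

/-- Maximum-entropy characterization of the Gaussian: among probability densities `f` on
`ℝⁿ` with `∫ ‖x‖² f = n`, the differential entropy `∫ −f log f` is at most
`(n/2)(1 + log 2π)`, with equality iff `f` is the standard Gaussian density a.e. -/
theorem entropy_le_gaussian (n : ℕ) (f : EuclideanSpace ℝ (Fin n) → ℝ)
    (hfmeas : Measurable f) (hf0 : ∀ x, 0 ≤ f x)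
    (hfint : Integrable f volume) (hf1 : ∫ x, f x ∂volume = 1)
    (hmom_int : Integrable (fun x => ‖x‖ ^ 2 * f x) volume)
    (hmom : ∫ x, ‖x‖ ^ 2 * f x ∂volume = (n : ℝ))
    (hent_int : Integrable (fun x => f x * Real.log (f x)) volume) :
    ∫ x, -(f x * Real.log (f x)) ∂volume ≤ (n : ℝ) / 2 * (1 + Real.log (2 * Real.pi)) ∧
      ((∫ x, -(f x * Real.log (f x)) ∂volume = (n : ℝ) / 2 * (1 + Real.log (2 * Real.pi))) ↔
        f =ᵐ[volume] fun x => (2 * Real.pi) ^ (-(n : ℝ) / 2) * Real.exp (-‖x‖ ^ 2 / 2)) :=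
  entropy_le_gaussian_general n f hf0 hfint hf1 hmom_int hmom hent_int
end

section
/- Let ξ and η be independent random vectors with values in ℝⁿ, and suppose ξ has law absolutely continuous with respect to Lebesgue measure with density f. Then ξ + η has absolutely continuous law with density g(t) = ∫ f(t−y) dμ(y) (μ the law of η), and the differential entropy satisfies ∫ ψ(g) dℓⁿ ≥ ∫ ψ(f) dℓⁿ, where ψ(x) = −x log x. -/
open MeasureTheory ProbabilityTheory

/-- If `ξ, η` are independent `ℝⁿ`-valued random vectors and the law of `ξ` has density `f`,
then `ξ + η` has density `g(t) = ∫ f(t−y) dμ_η(y)` and `∫ ψ(g) ≥ ∫ ψ(f)`,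
where `ψ(x) = −x log x`. -/
theorem entropy_of_indep_sum {Ω : Type*} [MeasurableSpace Ω]
    (μ : Measure Ω) [IsProbabilityMeasure μ] (n : ℕ)
    (ξ η : Ω → EuclideanSpace ℝ (Fin n)) (hξ : Measurable ξ) (hη : Measurable η)
    (hindep : IndepFun ξ η μ)
    (f : EuclideanSpace ℝ (Fin n) → ℝ) (hfmeas : Measurable f) (hf0 : ∀ x, 0 ≤ f x)
    (hlaw : μ.map ξ = volume.withDensity fun x => ENNReal.ofReal (f x))
    (hfint : Integrable (fun x => f x * Real.log (f x)) volume)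
    (hgint : Integrable
      (fun t => (∫ y, f (t - y) ∂(μ.map η)) * Real.log (∫ y, f (t - y) ∂(μ.map η)))
      volume) :
    μ.map (ξ + η)
        = volume.withDensity (fun t => ENNReal.ofReal (∫ y, f (t - y) ∂(μ.map η))) ∧
      ∫ x, -(f x * Real.log (f x)) ∂volume
        ≤ ∫ t, -((∫ y, f (t - y) ∂(μ.map η)) * Real.log (∫ y, f (t - y) ∂(μ.map η)))
            ∂volume := by
  have hνprob : IsProbabilityMeasure (μ.map η) := Measure.isProbabilityMeasure_map hη.aemeasurable
  have hξprob : IsProbabilityMeasure (μ.map ξ) := Measure.isProbabilityMeasure_map hξ.aemeasurable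
  -- f is integrable
  have hmass : ∫⁻ x, ENNReal.ofReal (f x)
      ∂(volume : Measure (EuclideanSpace ℝ (Fin n))) = 1 := by
    have h1 : μ.map ξ Set.univ = 1 := measure_univ
    rwa [hlaw, withDensity_apply _ MeasurableSet.univ, Measure.restrict_univ] at h1
  have hfInt : Integrable f (volume : Measure (EuclideanSpace ℝ (Fin n))) := by
    refine ⟨hfmeas.aestronglyMeasurable, ?_⟩
    rw [hasFiniteIntegral_iff_ofReal (Filter.Eventually.of_forall hf0), hmass]
    exact ENNReal.one_lt_top
  -- ψ ∘ f is integrable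
  have hψint : Integrable (fun x => Real.negMulLog (f x))
      (volume : Measure (EuclideanSpace ℝ (Fin n))) := by
    have he : (fun x => Real.negMulLog (f x)) = fun x => -(f x * Real.log (f x)) := by
      funext x; simp [Real.negMulLog, neg_mul]
    rw [he]; exact hfint.neg
  -- joint integrability of (t, y) ↦ g (t - y)
  have hsubmeas : Measurable
      (fun p : EuclideanSpace ℝ (Fin n) × EuclideanSpace ℝ (Fin n) => p.1 - p.2) :=
    measurable_fst.sub measurable_snd
  have prodInt : ∀ g : EuclideanSpace ℝ (Fin n) → ℝ, Measurable g →
      Integrable g (volume : Measure (EuclideanSpace ℝ (Fin n))) →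
      Integrable (fun p : EuclideanSpace ℝ (Fin n) × EuclideanSpace ℝ (Fin n) =>
        g (p.1 - p.2)) (volume.prod (μ.map η)) := by
    intro g hgm hgi
    refine (integrable_prod_iff' ((hgm.comp hsubmeas).aestronglyMeasurable)).mpr ⟨?_, ?_⟩
    · exact Filter.Eventually.of_forall fun y => hgi.comp_sub_right y
    · have h2 : (fun y : EuclideanSpace ℝ (Fin n) =>
          ∫ t, ‖g (t - y)‖ ∂(volume : Measure (EuclideanSpace ℝ (Fin n))))
          = fun _ => ∫ t, ‖g t‖ ∂(volume : Measure (EuclideanSpace ℝ (Fin n))) := by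
        funext y
        exact integral_sub_right_eq_self (fun t => ‖g t‖) y
      simp only [Function.comp] at h2 ⊢
      rw [h2]
      exact integrable_const _
  have hFint : Integrable (fun p : EuclideanSpace ℝ (Fin n) × EuclideanSpace ℝ (Fin n) =>
      f (p.1 - p.2)) (volume.prod (μ.map η)) := prodInt f hfmeas hfInt
  have hGint : Integrable (fun p : EuclideanSpace ℝ (Fin n) × EuclideanSpace ℝ (Fin n) =>
      Real.negMulLog (f (p.1 - p.2))) (volume.prod (μ.map η)) :=
    prodInt _ (Real.continuous_negMulLog.measurable.comp hfmeas) hψint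
  have hae_f : ∀ᵐ t ∂(volume : Measure (EuclideanSpace ℝ (Fin n))),
      Integrable (fun y => f (t - y)) (μ.map η) := hFint.prod_right_ae
  have hae_ψ : ∀ᵐ t ∂(volume : Measure (EuclideanSpace ℝ (Fin n))),
      Integrable (fun y => Real.negMulLog (f (t - y))) (μ.map η) := hGint.prod_right_ae
  constructor
  · -- the density of the sum
    have haddmeas : Measurable
        (fun p : EuclideanSpace ℝ (Fin n) × EuclideanSpace ℝ (Fin n) => p.1 + p.2) :=
      measurable_fst.add measurable_snd
    have hprod : μ.map (fun ω => (ξ ω, η ω)) = (μ.map ξ).prod (μ.map η) :=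
      (indepFun_iff_map_prod_eq_prod_map_map hξ.aemeasurable hη.aemeasurable).mp hindep
    have hmapsum : μ.map (ξ + η)
        = ((volume.withDensity fun x => ENNReal.ofReal (f x)).prod (μ.map η)).map
            (fun p : EuclideanSpace ℝ (Fin n) × EuclideanSpace ℝ (Fin n) => p.1 + p.2) := by
      rw [← hlaw, ← hprod, Measure.map_map haddmeas (hξ.prodMk hη)]
      rfl
    have key : μ.map (ξ + η)
        = volume.withDensity (fun t => ∫⁻ y, ENNReal.ofReal (f (t - y)) ∂(μ.map η)) := by
      rw [hmapsum]
      ext s hs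
      rw [Measure.map_apply haddmeas hs, withDensity_apply _ hs,
        Measure.prod_apply_symm (haddmeas hs)]
      have hterm : ∀ y : EuclideanSpace ℝ (Fin n),
          (volume.withDensity fun x => ENNReal.ofReal (f x))
              ((fun x : EuclideanSpace ℝ (Fin n) => (x, y)) ⁻¹'
                ((fun p : EuclideanSpace ℝ (Fin n) × EuclideanSpace ℝ (Fin n) =>
                  p.1 + p.2) ⁻¹' s))
            = ∫⁻ t in s, ENNReal.ofReal (f (t - y)) ∂volume := by
        intro y
        have hsety : MeasurableSet ((fun x : EuclideanSpace ℝ (Fin n) => x + y) ⁻¹' s) :=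
          hs.preimage (measurable_add_const y)
        have hpre : ((fun x : EuclideanSpace ℝ (Fin n) => (x, y)) ⁻¹'
            ((fun p : EuclideanSpace ℝ (Fin n) × EuclideanSpace ℝ (Fin n) =>
              p.1 + p.2) ⁻¹' s))
            = (fun x : EuclideanSpace ℝ (Fin n) => x + y) ⁻¹' s := rfl
        rw [hpre, withDensity_apply _ hsety, ← lintegral_indicator hsety,
          ← lintegral_indicator hs]
        have heq : ∀ x : EuclideanSpace ℝ (Fin n),
            ((fun x : EuclideanSpace ℝ (Fin n) => x + y) ⁻¹' s).indicator
                (fun x => ENNReal.ofReal (f x)) x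
              = s.indicator (fun t => ENNReal.ofReal (f (t - y))) (x + y) := by
          intro x
          by_cases hx : x + y ∈ s
          · rw [Set.indicator_of_mem hx, Set.indicator_of_mem (by exact hx),
              add_sub_cancel_right]
          · rw [Set.indicator_of_notMem hx, Set.indicator_of_notMem (by exact hx)]
        simp_rw [heq]
        exact lintegral_add_right_eq_self
          (s.indicator fun t => ENNReal.ofReal (f (t - y))) y
      simp_rw [hterm]
      have hmeasU : Measurable (Function.uncurry
          fun (y t : EuclideanSpace ℝ (Fin n)) => ENNReal.ofReal (f (t - y))) :=
        ENNReal.measurable_ofReal.comp (hfmeas.comp (measurable_snd.sub measurable_fst))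
      rw [lintegral_lintegral_swap hmeasU.aemeasurable]
    rw [key]
    refine withDensity_congr_ae ?_
    filter_upwards [hae_f] with t ht
    rw [← ofReal_integral_eq_lintegral_ofReal ht
      (Filter.Eventually.of_forall fun y => hf0 _)]
  · -- the entropy inequality
    have hL : Integrable
        (fun t => ∫ y, Real.negMulLog (f (t - y)) ∂(μ.map η))
        (volume : Measure (EuclideanSpace ℝ (Fin n))) :=
      hGint.integral_prod_left
    have hR : Integrable
        (fun t => -((∫ y, f (t - y) ∂(μ.map η)) * Real.log (∫ y, f (t - y) ∂(μ.map η))))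
        (volume : Measure (EuclideanSpace ℝ (Fin n))) := hgint.neg
    have hjensen : ∀ᵐ t ∂(volume : Measure (EuclideanSpace ℝ (Fin n))),
        (∫ y, Real.negMulLog (f (t - y)) ∂(μ.map η))
          ≤ -((∫ y, f (t - y) ∂(μ.map η)) * Real.log (∫ y, f (t - y) ∂(μ.map η))) := by
      filter_upwards [hae_f, hae_ψ] with t h1 h2
      have hj := Real.concaveOn_negMulLog.le_map_integral
        Real.continuous_negMulLog.continuousOn isClosed_Ici
        (Filter.Eventually.of_forall fun y : EuclideanSpace ℝ (Fin n) =>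
          (hf0 (t - y) : f (t - y) ∈ Set.Ici (0:ℝ)))
        h1 h2
      simpa [Real.negMulLog, neg_mul] using hj
    have hswap : ∫ t, ∫ y, Real.negMulLog (f (t - y)) ∂(μ.map η)
          ∂(volume : Measure (EuclideanSpace ℝ (Fin n)))
        = ∫ x, Real.negMulLog (f x)
          ∂(volume : Measure (EuclideanSpace ℝ (Fin n))) := by
      rw [integral_integral_swap (by exact hGint)]
      have h3 : ∀ y : EuclideanSpace ℝ (Fin n),
          ∫ t, Real.negMulLog (f (t - y)) ∂(volume : Measure (EuclideanSpace ℝ (Fin n)))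
          = ∫ x, Real.negMulLog (f x)
              ∂(volume : Measure (EuclideanSpace ℝ (Fin n))) := fun y =>
        integral_sub_right_eq_self (fun x => Real.negMulLog (f x)) y
      simp_rw [h3]
      simp
    calc ∫ x, -(f x * Real.log (f x)) ∂(volume : Measure (EuclideanSpace ℝ (Fin n)))
        = ∫ x, Real.negMulLog (f x) ∂(volume : Measure (EuclideanSpace ℝ (Fin n))) := by
          simp [Real.negMulLog, neg_mul]
      _ = ∫ t, ∫ y, Real.negMulLog (f (t - y)) ∂(μ.map η)
            ∂(volume : Measure (EuclideanSpace ℝ (Fin n))) := hswap.symm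
      _ ≤ ∫ t, -((∫ y, f (t - y) ∂(μ.map η)) * Real.log (∫ y, f (t - y) ∂(μ.map η)))
            ∂(volume : Measure (EuclideanSpace ℝ (Fin n))) :=
          integral_mono_ae hL hR hjensen
end
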